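/- arXiv:1110.0580 — 2 statements merged into one kernel-verified Lean document; each statement's English description precedes it below -/
import Mathlib

section
/- For every polynomial f and every form u, H_{q^{-1}}(u θ_0 f)(z) = q (H_q u)θ_0(h_{q^{-1}} f)(z) + (u θ_0(H_{q^{-1}} f))(z), an identity of polynomials. -/
open Polynomial

noncomputable section

namespace QLH

/-- A *form*: a linear functional on ℂ[x]. -/
abbrev PForm : Type := Polynomial ℂ →ₗ[ℂ] ℂ

private lemma divByMonic_add (d f g : Polynomial ℂ) (hd : d.Monic) :
    (f + g) /ₘ d = f /ₘ d + g /ₘ d := by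
  apply mul_left_cancel₀ hd.ne_zero
  have h1 : d * (f /ₘ d) = f - f %ₘ d := by
    rw [Polynomial.modByMonic_eq_sub_mul_div f d]; ring
  have h2 : d * (g /ₘ d) = g - g %ₘ d := by
    rw [Polynomial.modByMonic_eq_sub_mul_div g d]; ring
  have h3 : d * ((f + g) /ₘ d) = (f + g) - (f + g) %ₘ d := by
    rw [Polynomial.modByMonic_eq_sub_mul_div (f + g) d]; ring
  rw [mul_add, h1, h2, h3, Polynomial.add_modByMonic]
  ring

private lemma divByMonic_smul (d f : Polynomial ℂ) (a : ℂ) (hd : d.Monic) :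
    (a • f) /ₘ d = a • (f /ₘ d) := by
  apply mul_left_cancel₀ hd.ne_zero
  have h1 : d * (f /ₘ d) = f - f %ₘ d := by
    rw [Polynomial.modByMonic_eq_sub_mul_div f d]; ring
  have h3 : d * ((a • f) /ₘ d) = (a • f) - (a • f) %ₘ d := by
    rw [Polynomial.modByMonic_eq_sub_mul_div (a • f) d]; ring
  rw [h3, Polynomial.smul_modByMonic, mul_smul_comm, h1, smul_sub]

/-- `(h_a f)(x) = f (a x)`. -/
def hP (a : ℂ) : Polynomial ℂ →ₗ[ℂ] Polynomial ℂ :=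
  (Polynomial.aeval (Polynomial.C a * Polynomial.X : Polynomial ℂ)).toLinearMap

/-- `(θ_c f)(x) = (f(x) - f(c))/(x - c)`. -/
def thetaP (c : ℂ) : Polynomial ℂ →ₗ[ℂ] Polynomial ℂ where
  toFun f := (f - C (f.eval c)) /ₘ (X - C c)
  map_add' f g := by
    try dsimp only
    have h : f + g - C ((f + g).eval c)
        = (f - C (f.eval c)) + (g - C (g.eval c)) := by
      simp only [eval_add, C_add]; ring
    rw [h, divByMonic_add _ _ _ (monic_X_sub_C c)]
  map_smul' a f := by
    try dsimp only
    have h : a • f - C ((a • f).eval c) = a • (f - C (f.eval c)) := by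
      simp only [eval_smul, smul_eq_mul, smul_sub, Polynomial.smul_C]
    rw [h, divByMonic_smul _ _ _ (monic_X_sub_C c)]
    rfl

/-- `(H_q f)(x) = (f(qx) - f(x))/((q-1)x)`. -/
def HqP (q : ℂ) : Polynomial ℂ →ₗ[ℂ] Polynomial ℂ :=
  (q - 1)⁻¹ • (thetaP 0 ∘ₗ (hP q - LinearMap.id))

/-- `⟨h_a u, f⟩ = ⟨u, h_a f⟩`. -/
def hF (a : ℂ) (u : PForm) : PForm := u ∘ₗ hP a

/-- `⟨H_q u, f⟩ = -⟨u, H_q f⟩`. -/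
def HqF (q : ℂ) (u : PForm) : PForm := -(u ∘ₗ HqP q)

/-- `⟨g u, f⟩ = ⟨u, g f⟩`. -/
def mF (g : Polynomial ℂ) (u : PForm) : PForm := u ∘ₗ LinearMap.mulLeft ℂ g

/-- `⟨(x - c)⁻¹ u, f⟩ = ⟨u, θ_c f⟩`. -/
def divF (c : ℂ) (u : PForm) : PForm := u ∘ₗ thetaP c

/-- The Dirac form `δ_c`. -/
def deltaF (c : ℂ) : PForm := Polynomial.leval c

/-- Kernel used in the left product of a form by a polynomial. -/
def kern (u : PForm) (j : ℕ) : Polynomial ℂ :=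
  ∑ i ∈ Finset.range (j + 1), C (u (X ^ (j - i))) * X ^ i

/-- The left product `f ↦ u f`, `(uf)(x) = ⟨u_ζ, (x f(x) - ζ f(ζ))/(x - ζ)⟩`. -/
def lmul (u : PForm) : Polynomial ℂ →ₗ[ℂ] Polynomial ℂ where
  toFun f := f.sum fun j a => a • kern u j
  map_add' f g :=
    Polynomial.sum_add_index f g _ (fun i => zero_smul ℂ _) fun i b₁ b₂ => add_smul b₁ b₂ _
  map_smul' a f := by
    try dsimp only
    rw [Polynomial.sum_smul_index f a (fun j b => b • kern u j) fun i => zero_smul ℂ _]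
    simp only [Polynomial.sum_def, mul_smul, ← Finset.smul_sum]
    rfl

/-- The Cauchy product of two forms: `⟨uv, f⟩ = ⟨u, v f⟩`. -/
def cF (u v : PForm) : PForm := u ∘ₗ lmul v

/-- The q-difference equation `H_q(Φu) + Ψu + B(x⁻¹ u (h_q u)) = 0`. -/
def LHeq (q : ℂ) (u : PForm) (Φ Ψ B : Polynomial ℂ) : Prop :=
  HqF q (mF Φ u) + mF Ψ u + mF B (divF 0 (cF u (hF q u))) = 0

/-- A form is regular when it possesses a MOPS. -/
def IsRegular (u : PForm) : Prop :=
  ∃ P : ℕ → Polynomial ℂ, (∀ n, (P n).Monic) ∧ (∀ n, (P n).natDegree = n) ∧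
    (∀ n, u (P n * P n) ≠ 0) ∧ ∀ m n, m ≠ n → u (P m * P n) = 0

/-- A regular form is q-semiclassical when it satisfies `H_q(Φu) + Ψu = 0`, `Φ` monic. -/
def IsSemiclassical (q : ℂ) (u : PForm) : Prop :=
  IsRegular u ∧ ∃ Φ Ψ : Polynomial ℂ, Φ.Monic ∧ HqF q (mF Φ u) + mF Ψ u = 0

/-- A regular form is q-Laguerre–Hahn when it satisfies some equation `LHeq`. -/
def IsLaguerreHahn (q : ℂ) (u : PForm) : Prop :=
  IsRegular u ∧ ∃ Φ Ψ B : Polynomial ℂ, Φ.Monic ∧ LHeq q u Φ Ψ B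

/-- `u` is of class `s`: `s` is the minimum of `max (deg Ψ - 1) (max (deg Φ) (deg B) - 2)`
over all q-difference equations `LHeq q u Φ Ψ B` (`Φ` monic) satisfied by `u`. -/
def HasClass (q : ℂ) (u : PForm) (s : ℕ) : Prop :=
  (∃ Φ Ψ B : Polynomial ℂ, Φ.Monic ∧ LHeq q u Φ Ψ B ∧
      Φ.natDegree ≤ s + 2 ∧ B.natDegree ≤ s + 2 ∧ Ψ.natDegree ≤ s + 1) ∧
  ∀ t : ℕ, (∃ Φ Ψ B : Polynomial ℂ, Φ.Monic ∧ LHeq q u Φ Ψ B ∧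
      Φ.natDegree ≤ t + 2 ∧ B.natDegree ≤ t + 2 ∧ Ψ.natDegree ≤ t + 1) → s ≤ t

/-- Formal Stieltjes series `S(u)(z) = -∑ (u)_n z^{-n-1}`, as a formal Laurent
series in the variable `T = z⁻¹`. -/
def Sf (u : PForm) : LaurentSeries ℂ :=
  HahnSeries.ofPowerSeries ℤ ℂ (PowerSeries.mk fun n => if n = 0 then 0 else -u (X ^ (n - 1)))

/-- A polynomial `f(z)`, viewed as a formal Laurent series in `T = z⁻¹`. -/
def toLS (f : Polynomial ℂ) : LaurentSeries ℂ :=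
  ∑ j ∈ Finset.range (f.natDegree + 1), HahnSeries.single (-(j : ℤ)) (f.coeff j)

/-- The Laurent series `z` (in the variable `T = z⁻¹`). -/
def zLS : LaurentSeries ℂ := HahnSeries.single (-1 : ℤ) 1

/-- `(h_a F)(z) = F(az)` on formal Laurent series in `T = z⁻¹`. -/
def hLS (a : ℂ) (F : LaurentSeries ℂ) : LaurentSeries ℂ where
  coeff := fun k => a ^ (-k) * F.coeff k
  isPWO_support' := F.isPWO_support'.mono fun k hk => by
    simp only [Function.mem_support] at hk ⊢
    exact fun h => hk (by rw [h, mul_zero])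

/-- `(H_q F)(z) = (F(qz) - F(z))/((q-1)z)` on formal Laurent series in `T = z⁻¹`. -/
def HqLS (q : ℂ) (F : LaurentSeries ℂ) : LaurentSeries ℂ :=
  HahnSeries.single (1 : ℤ) ((q - 1)⁻¹) * (hLS q F - F)


/-! Both sides are linear in `f`, so it suffices to take `f = X ^ (m + 1)`. Then `θ₀ f = X ^ m`
and `u θ₀ f = ∑_{i+j=m} ⟨u, X^j⟩ X^i`. With `p = q⁻¹`, `H_p X^{i+1} = [i+1]_p X^i` and
`⟨H_q u, X^{j+1}⟩ = -[j+1]_q ⟨u, X^j⟩`, so comparing the coefficients of `⟨u, X^j⟩ X^i` reduces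
the identity to `[i+j+2]_p = [i+1]_p + p^{i+1} [j+1]_p` and `[j+1]_p = p^j [j+1]_q`. -/

open Finset

theorem thetaP_zero_one : thetaP 0 (1 : ℂ[X]) = 0 := by
  simp [thetaP]

theorem thetaP_zero_X_pow_succ (n : ℕ) : thetaP 0 ((X : ℂ[X]) ^ (n + 1)) = X ^ n := by
  simp [thetaP, pow_succ', mul_divByMonic_cancel_left _ monic_X]

theorem hP_X_pow (a : ℂ) (n : ℕ) : hP a ((X : ℂ[X]) ^ n) = a ^ n • X ^ n := by
  simp [hP, mul_pow, smul_eq_C_mul]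

/-- The `q`-integer `[n]_q`; at `q = 1` it is `0` rather than `n`, just as `HqP 1 = 0`. -/
def qNum (q : ℂ) (n : ℕ) : ℂ := (q - 1)⁻¹ * (q ^ n - 1)

theorem qNum_add (q : ℂ) (m n : ℕ) : qNum q (m + n) = qNum q m + q ^ m * qNum q n := by
  simp only [qNum]; ring

theorem qNum_inv {q : ℂ} (hq0 : q ≠ 0) (n : ℕ) :
    qNum q⁻¹ (n + 1) = q⁻¹ ^ n * qNum q (n + 1) := by
  have hinv : (q⁻¹ - 1)⁻¹ = -(q * (q - 1)⁻¹) := by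
    rw [show q⁻¹ - 1 = -((q - 1) * q⁻¹) by field_simp; ring, inv_neg, mul_inv, inv_inv, mul_comm]
  have e1 : q * q⁻¹ = 1 := mul_inv_cancel₀ hq0
  have e2 : q⁻¹ ^ n * q ^ n = 1 := by rw [← mul_pow, inv_mul_cancel₀ hq0, one_pow]
  rw [qNum, qNum, hinv]
  linear_combination (-(q - 1)⁻¹ * q⁻¹ ^ n) * e1 - ((q - 1)⁻¹ * q) * e2

theorem HqP_C (q a : ℂ) : HqP q (C a) = 0 := by
  simp [HqP, hP]

theorem HqP_one (q : ℂ) : HqP q 1 = 0 := by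
  simpa using HqP_C q 1

theorem HqP_X_pow_succ (q : ℂ) (n : ℕ) :
    HqP q ((X : ℂ[X]) ^ (n + 1)) = qNum q (n + 1) • X ^ n := by
  simp only [HqP, LinearMap.smul_apply, LinearMap.comp_apply, LinearMap.sub_apply,
    LinearMap.id_apply, hP_X_pow, map_sub, map_smul, thetaP_zero_X_pow_succ]
  rw [qNum, mul_smul, sub_smul, one_smul]

theorem HqF_apply_one (q : ℂ) (u : PForm) : HqF q u 1 = 0 := by
  simp [HqF, HqP_one]

theorem HqF_apply_X_pow_succ (q : ℂ) (u : PForm) (n : ℕ) :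
    HqF q u ((X : ℂ[X]) ^ (n + 1)) = -(qNum q (n + 1) * u (X ^ n)) := by
  simp [HqF, HqP_X_pow_succ]

theorem kern_eq_sum_antidiagonal (u : PForm) (m : ℕ) :
    kern u m = ∑ p ∈ antidiagonal m, u (X ^ p.2) • (X : ℂ[X]) ^ p.1 := by
  rw [Nat.sum_antidiagonal_eq_sum_range_succ (fun i j => u (X ^ j) • (X : ℂ[X]) ^ i)]
  simp [kern, smul_eq_C_mul]

theorem lmul_X_pow (u : PForm) (n : ℕ) : lmul u ((X : ℂ[X]) ^ n) = kern u n := by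
  simp [lmul, X_pow_eq_monomial]

theorem HqP_inv_kern {q : ℂ} (hq0 : q ≠ 0) (u : PForm) (m : ℕ) :
    HqP q⁻¹ (kern u m)
      = q⁻¹ ^ m • kern (HqF q u) m + qNum q⁻¹ (m + 1) • lmul u (thetaP 0 (X ^ m)) := by
  cases m with
  | zero => simp [kern, HqP_C, HqF_apply_one, thetaP_zero_one]
  | succ k =>
    rw [thetaP_zero_X_pow_succ, lmul_X_pow]
    simp only [kern_eq_sum_antidiagonal]
    rw [Nat.sum_antidiagonal_succ,
      Nat.sum_antidiagonal_succ' (f := fun p => HqF q u (X ^ p.2) • X ^ p.1)]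
    simp only [map_add, map_sum, map_smul, pow_zero, HqP_one, HqF_apply_one,
      HqF_apply_X_pow_succ, HqP_X_pow_succ, smul_zero, zero_smul, zero_add, smul_sum,
      ← sum_add_distrib, smul_smul, ← add_smul]
    refine sum_congr rfl fun ⟨i, j⟩ hij => ?_
    obtain rfl : i + j = k := mem_antidiagonal.mp hij
    have hadd := qNum_add q⁻¹ (i + 1) (j + 1)
    rw [show i + 1 + (j + 1) = i + j + 1 + 1 by ring] at hadd
    congr 1
    linear_combination (-u (X ^ j)) * hadd
      - (u (X ^ j) * q⁻¹ ^ (i + 1)) * qNum_inv hq0 j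

theorem Hq_leftprod_general (q : ℂ) (hq0 : q ≠ 0)
    (f : Polynomial ℂ) (u : PForm) :
    HqP q⁻¹ (lmul u (thetaP 0 f))
      = q • lmul (HqF q u) (thetaP 0 (hP q⁻¹ f)) + lmul u (thetaP 0 (HqP q⁻¹ f)) := by
  suffices h : HqP q⁻¹ ∘ₗ lmul u ∘ₗ thetaP 0
      = q • lmul (HqF q u) ∘ₗ thetaP 0 ∘ₗ hP q⁻¹ + lmul u ∘ₗ thetaP 0 ∘ₗ HqP q⁻¹ from
    LinearMap.congr_fun h f
  refine (basisMonomials ℂ).ext fun n => ?_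
  simp only [coe_basisMonomials, ← X_pow_eq_monomial, LinearMap.add_apply, LinearMap.smul_apply,
    LinearMap.comp_apply, hP_X_pow]
  cases n with
  | zero => simp [thetaP_zero_one, HqP_one]
  | succ m =>
    rw [HqP_X_pow_succ]
    simp only [map_smul, thetaP_zero_X_pow_succ, lmul_X_pow, HqP_inv_kern hq0, smul_smul]
    rw [pow_succ', ← mul_assoc, mul_inv_cancel₀ hq0, one_mul]

/-- `H_{q⁻¹}(uθ₀f) = q (H_q u)θ₀(h_{q⁻¹}f) + uθ₀(H_{q⁻¹}f)`. -/
theorem Hq_leftprod (q : ℂ) (hq0 : q ≠ 0) (hq : ∀ n : ℕ, 1 ≤ n → q ^ n ≠ 1)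
    (f : Polynomial ℂ) (u : PForm) :
    HqP q⁻¹ (lmul u (thetaP 0 f))
      = q • lmul (HqF q u) (thetaP 0 (hP q⁻¹ f)) + lmul u (thetaP 0 (HqP q⁻¹ f)) :=
  Hq_leftprod_general q hq0 f u

end QLH

end
end

section
/- Let u be a regular form that is strict q-Laguerre–Hahn, satisfying H_q(Φ u) + Ψ u + B(x^{-1} u (h_q u)) = 0 with Φ monic. If two polynomials Δ and Ω satisfy Δ u + Ω(x^{-1} u (h_q u)) = 0, then Δ = 0 and Ω = 0. -/
open Polynomial

noncomputable section

namespace QLH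

/-!
If `Ω ≠ 0`, multiplying the Laguerre–Hahn equation by `Ω` and the relation by `B` and
subtracting eliminates `x⁻¹ u (h_q u)`. Moving `Ω` through `H_q` with the q-Leibniz rule
`f H_q v = H_q((h_q f) v) - (H_q f) v` leaves
`H_q(Φ (h_q Ω) u) + (Ψ Ω - Φ H_q Ω - Δ B) u = 0`, and `Φ (h_q Ω) ≠ 0` because `q ≠ 0`;
after normalising its leading coefficient this is a q-semiclassical equation for `u`,
contradicting strictness. So `Ω = 0` and `Δ u = 0`. Writing `Δ = c P_d + (lower degree)` with
`c ≠ 0` in terms of the MOPS gives `⟨Δ u, P_d⟩ = c ⟨u, P_d²⟩ ≠ 0`, so `Δ = 0`.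
-/

section PolynomialOperators

variable (a q : ℂ) (f g : ℂ[X])

theorem hP_apply : hP a f = f.comp (C a * X) := rfl

theorem hP_mul : hP a (f * g) = hP a f * hP a g := by
  simp [hP]

theorem eval_zero_hP : (hP a f).eval 0 = f.eval 0 := by
  simp [hP_apply, eval_comp]

theorem hP_injective {a : ℂ} (ha : a ≠ 0) : Function.Injective (hP a) :=
  (injective_iff_map_eq_zero (hP a)).2 fun _ hf =>
    (comp_C_mul_X_eq_zero_iff (mem_nonZeroDivisors_of_ne_zero ha)).1 hf

theorem X_mul_thetaP_zero : X * thetaP 0 f = f - C (f.eval 0) := by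
  show X * ((f - C (f.eval 0)) /ₘ (X - C 0)) = _
  simpa using mul_divByMonic_eq_iff_isRoot.2 (show (f - C (f.eval 0)).IsRoot 0 by simp)

theorem X_mul_HqP : X * HqP q f = C (q - 1)⁻¹ * (hP q f - f) := by
  have h : (hP q f - f).eval 0 = 0 := by simp [eval_zero_hP]
  simp only [HqP, LinearMap.smul_apply, LinearMap.comp_apply, LinearMap.sub_apply,
    LinearMap.id_apply, smul_eq_C_mul]
  rw [mul_left_comm, X_mul_thetaP_zero, h, C_0, sub_zero]

theorem HqP_mul : HqP q (f * g) = hP q f * HqP q g + HqP q f * g := by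
  apply mul_left_cancel₀ (X_ne_zero : (X : ℂ[X]) ≠ 0)
  linear_combination X_mul_HqP q (f * g) - hP q f * X_mul_HqP q g - g * X_mul_HqP q f +
    C (q - 1)⁻¹ * hP_mul q f g

end PolynomialOperators

section Forms

variable (q c : ℂ) (f g : ℂ[X]) (u v : PForm)

theorem mF_apply (p : ℂ[X]) : mF g u p = u (g * p) := rfl

theorem HqF_apply (p : ℂ[X]) : HqF q u p = -u (HqP q p) := rfl

theorem mF_mF : mF f (mF g u) = mF (g * f) u := by
  ext p; simp [mF_apply, mul_assoc]

theorem sub_mF : mF (f - g) u = mF f u - mF g u := by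
  ext p; simp [mF_apply, sub_mul]

theorem mF_add : mF g (u + v) = mF g u + mF g v := LinearMap.add_comp _ _ _

theorem zero_mF : mF 0 u = 0 := by
  ext p; simp [mF_apply]

theorem mF_zero : mF g 0 = 0 := LinearMap.zero_comp _

theorem C_mul_mF : mF (C c * g) u = c • mF g u := by
  ext p; simp [mF_apply, ← smul_eq_C_mul]

theorem HqF_smul : HqF q (c • u) = c • HqF q u := by
  ext p; simp [HqF_apply]

theorem mF_HqF : mF f (HqF q v) = HqF q (mF (hP q f) v) - mF (HqP q f) v := by
  ext p; simp [HqF_apply, mF_apply, HqP_mul]; ring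

end Forms

theorem isSemiclassical_of_HqF_add_eq_zero {q : ℂ} {u : PForm} (hreg : IsRegular u)
    {A R : ℂ[X]} (hA : A ≠ 0) (h : HqF q (mF A u) + mF R u = 0) : IsSemiclassical q u := by
  have hc : A.leadingCoeff⁻¹ * A.leadingCoeff = 1 := inv_mul_cancel₀ (leadingCoeff_ne_zero.2 hA)
  refine ⟨hreg, C A.leadingCoeff⁻¹ * A, C A.leadingCoeff⁻¹ * R,
    monic_C_mul_of_mul_leadingCoeff_eq_one hc, ?_⟩
  rw [C_mul_mF, C_mul_mF, HqF_smul, ← smul_add, h, smul_zero]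

theorem apply_mul_eq_zero_of_degree_lt {u : PForm} {P : ℕ → ℂ[X]} (hm : ∀ n, (P n).Monic)
    (hd : ∀ n, (P n).natDegree = n) (horth : ∀ m n, m ≠ n → u (P m * P n) = 0) {n : ℕ}
    {f : ℂ[X]} (hf : f.degree < n) : u (f * P n) = 0 := by
  let S : Sequence ℂ := ⟨P, fun i => by rw [degree_eq_natDegree (hm i).ne_zero, hd i]⟩
  have hspan : degreeLT ℂ n ≤ LinearMap.ker (u ∘ₗ LinearMap.mulRight ℂ (P n)) := by
    rw [← S.span_degreeLT fun i _ => by simp [S, (hm i).leadingCoeff], Submodule.span_le]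
    rintro _ ⟨m, hmn, rfl⟩
    exact horth m n (Set.mem_Iio.1 hmn).ne
  exact hspan (mem_degreeLT.2 hf)

theorem IsRegular.eq_zero_of_mF_eq_zero {u : PForm} (hreg : IsRegular u) {Δ : ℂ[X]}
    (h : mF Δ u = 0) : Δ = 0 := by
  obtain ⟨P, hm, hd, hnz, horth⟩ := hreg
  by_contra hΔ
  set d := Δ.natDegree
  have hlow : (Δ - C Δ.leadingCoeff * P d).degree < d := by
    have hPd : (C Δ.leadingCoeff * P d).degree = Δ.degree := by
      rw [degree_C_mul (leadingCoeff_ne_zero.2 hΔ), degree_eq_natDegree (hm d).ne_zero, hd,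
        degree_eq_natDegree hΔ]
    simpa [degree_eq_natDegree hΔ] using degree_sub_lt_left hPd.symm hΔ (by simp [hm d])
  have key : u (Δ * P d) = Δ.leadingCoeff * u (P d * P d) := by
    nth_rw 1 [← sub_add_cancel Δ (C Δ.leadingCoeff * P d)]
    rw [add_mul, map_add, apply_mul_eq_zero_of_degree_lt hm hd horth hlow, zero_add, mul_assoc,
      ← smul_eq_C_mul, map_smul, smul_eq_mul]
  exact mul_ne_zero (leadingCoeff_ne_zero.2 hΔ) (hnz d) (key ▸ LinearMap.congr_fun h (P d))

theorem HqF_mF_add_mF_eq_zero_of_relation {q : ℂ} {u D : PForm} {Φ Ψ B Δ Ω : ℂ[X]}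
    (heq : HqF q (mF Φ u) + mF Ψ u + mF B D = 0) (hrel : mF Δ u + mF Ω D = 0) :
    HqF q (mF (Φ * hP q Ω) u) + mF (Ψ * Ω - Φ * HqP q Ω - Δ * B) u = 0 := by
  have e1 := congrArg (mF Ω) heq
  have e2 := congrArg (mF B) hrel
  simp only [mF_add, mF_zero, mF_HqF, mF_mF, mul_comm Ω B] at e1 e2
  rw [sub_mF, sub_mF]
  linear_combination (norm := module) e1 - e2

theorem strict_LH_no_relation_general (q : ℂ) (hq0 : q ≠ 0)
    (u : PForm) (hreg : IsRegular u)
    (Φ Ψ B : Polynomial ℂ) (hΦ : Φ.Monic) (heq : LHeq q u Φ Ψ B)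
    (hstrict : ¬ IsSemiclassical q u)
    (Δ Ω : Polynomial ℂ)
    (hrel : mF Δ u + mF Ω (divF 0 (cF u (hF q u))) = 0) :
    Δ = 0 ∧ Ω = 0 := by
  have hΩ : Ω = 0 := by
    by_contra hΩ
    have hA : Φ * hP q Ω ≠ 0 :=
      mul_ne_zero hΦ.ne_zero ((map_ne_zero_iff _ (hP_injective hq0)).2 hΩ)
    exact hstrict <| isSemiclassical_of_HqF_add_eq_zero hreg hA <|
      HqF_mF_add_mF_eq_zero_of_relation heq hrel
  subst hΩ
  refine ⟨hreg.eq_zero_of_mF_eq_zero ?_, rfl⟩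
  simpa [zero_mF] using hrel

/-- for a strict q-Laguerre–Hahn form, a relation
`Δu + Ω(x⁻¹ u (h_q u)) = 0` forces `Δ = Ω = 0`. -/
theorem strict_LH_no_relation (q : ℂ) (hq0 : q ≠ 0) (hq : ∀ n : ℕ, 1 ≤ n → q ^ n ≠ 1)
    (u : PForm) (hreg : IsRegular u)
    (Φ Ψ B : Polynomial ℂ) (hΦ : Φ.Monic) (heq : LHeq q u Φ Ψ B)
    (hstrict : ¬ IsSemiclassical q u)
    (Δ Ω : Polynomial ℂ)
    (hrel : mF Δ u + mF Ω (divF 0 (cF u (hF q u))) = 0) :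
    Δ = 0 ∧ Ω = 0 :=
  strict_LH_no_relation_general q hq0 u hreg Φ Ψ B hΦ heq hstrict Δ Ω hrel

end QLH

end
end
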